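/- arXiv:2303.11365 — 5 statements merged into one kernel-verified Lean document; each statement's English description precedes it below -/
import Mathlib

section
/- (Bubble Characterization Lemma.) Let (P_t)_{t≥0} be a sequence of strictly positive reals, (D_t)_{t≥1} a sequence of nonnegative reals, and (q_t)_{t≥0} a sequence of strictly positive reals with q_0 = 1 and satisfying the no-arbitrage relation q_t·P_t = q_{t+1}·(P_{t+1} + D_{t+1}) for all t ≥ 0. Then the sequence (q_t·P_t) is nonincreasing, its limit L := lim_{T→∞} q_T·P_T exists, and L > 0 if and only if the series ∑_{t=1}^∞ D_t/P_t converges. -/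
open Real Filter Set Topology

/-- Bubble Characterization Lemma (Montrucchio): under no-arbitrage the discounted
price `q_t·P_t` is nonincreasing, its limit `L` exists, and `L > 0` iff
`∑_{t=1}^∞ D_t/P_t < ∞`. -/
theorem stmt_4 (P D q : ℕ → ℝ) (hP : ∀ t, 0 < P t) (hD : ∀ t : ℕ, 0 ≤ D (t + 1))
    (hq0 : q 0 = 1) (hq : ∀ t, 0 < q t)
    (hna : ∀ t : ℕ, q t * P t = q (t + 1) * (P (t + 1) + D (t + 1))) :
    Antitone (fun t : ℕ => q t * P t) ∧
    ∃ L : ℝ, Tendsto (fun T : ℕ => q T * P T) atTop (𝓝 L) ∧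
      (0 < L ↔ Summable (fun t : ℕ => D (t + 1) / P (t + 1))) := by
  set a : ℕ → ℝ := fun t => q t * P t with ha
  set d : ℕ → ℝ := fun t => D (t + 1) / P (t + 1) with hd
  have hdnn : ∀ t, 0 ≤ d t := fun t => div_nonneg (hD t) (hP _).le
  have hapos : ∀ t, 0 < a t := fun t => mul_pos (hq t) (hP t)
  have hstep : ∀ t, a t = a (t + 1) * (1 + d t) := by
    intro t
    have hp : P (t + 1) ≠ 0 := (hP (t + 1)).ne'
    simp only [ha, hd]
    rw [hna t]
    field_simp
  have hant : Antitone a := by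
    apply antitone_nat_of_succ_le
    intro t
    calc a (t + 1) = a (t + 1) * 1 := (mul_one _).symm
      _ ≤ a (t + 1) * (1 + d t) := by
          apply mul_le_mul_of_nonneg_left _ (hapos (t + 1)).le
          linarith [hdnn t]
      _ = a t := (hstep t).symm
  have hprod : ∀ t, (∏ s ∈ Finset.range t, (1 + d s)) * a t = a 0 := by
    intro t
    induction t with
    | zero => simp
    | succ t ih =>
      rw [Finset.prod_range_succ]
      calc (∏ s ∈ Finset.range t, (1 + d s)) * (1 + d t) * a (t + 1)
          = (∏ s ∈ Finset.range t, (1 + d s)) * (a (t + 1) * (1 + d t)) := by ring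
        _ = (∏ s ∈ Finset.range t, (1 + d s)) * a t := by rw [← hstep t]
        _ = a 0 := ih
  have hprodpos : ∀ t, 0 < ∏ s ∈ Finset.range t, (1 + d s) := by
    intro t
    apply Finset.prod_pos
    intro s _
    linarith [hdnn s]
  have hbdd : BddBelow (Set.range a) := ⟨0, by rintro x ⟨t, rfl⟩; exact (hapos t).le⟩
  have hL : Tendsto a atTop (𝓝 (⨅ t, a t)) := tendsto_atTop_ciInf hant hbdd
  set L := ⨅ t, a t with hLdef
  have hLle : ∀ t, L ≤ a t := fun t => ciInf_le hbdd t
  refine ⟨hant, L, hL, ?_, ?_⟩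
  · -- L > 0 → summable
    intro hLpos
    have hsum_le : ∀ n, ∑ s ∈ Finset.range n, d s ≤ a 0 / L - 1 := by
      intro n
      have h1 : 1 + ∑ s ∈ Finset.range n, d s ≤ ∏ s ∈ Finset.range n, (1 + d s) := by
        induction n with
        | zero => simp
        | succ n ih =>
          rw [Finset.prod_range_succ, Finset.sum_range_succ]
          have hS : 0 ≤ ∑ s ∈ Finset.range n, d s :=
            Finset.sum_nonneg fun s _ => hdnn s
          nlinarith [hdnn n, hprodpos n]
      have h2 : (∏ s ∈ Finset.range n, (1 + d s)) ≤ a 0 / L := by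
        have := hprod n
        rw [le_div_iff₀ hLpos]
        nlinarith [hLle n, hprodpos n, hapos n]
      linarith
    exact summable_of_sum_range_le hdnn hsum_le
  · -- summable → L > 0
    intro hsum
    set S := ∑' t, d t with hS
    have hpos : 0 < a 0 / Real.exp S := div_pos (hapos 0) (Real.exp_pos S)
    have hub : ∀ t, a 0 / Real.exp S ≤ a t := by
      intro t
      have h1 : (∏ s ∈ Finset.range t, (1 + d s)) ≤ Real.exp S := by
        calc (∏ s ∈ Finset.range t, (1 + d s))
            ≤ ∏ s ∈ Finset.range t, Real.exp (d s) := by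
              apply Finset.prod_le_prod
              · intro s _; linarith [hdnn s]
              · intro s _; linarith [Real.add_one_le_exp (d s)]
          _ = Real.exp (∑ s ∈ Finset.range t, d s) := (Real.exp_sum _ _).symm
          _ ≤ Real.exp S := by
              apply Real.exp_le_exp.2
              exact Summable.sum_le_tsum _ (fun s _ => hdnn s) hsum
      rw [div_le_iff₀ (Real.exp_pos S)]
      calc a 0 = (∏ s ∈ Finset.range t, (1 + d s)) * a t := (hprod t).symm
        _ ≤ Real.exp S * a t := by
            apply mul_le_mul_of_nonneg_right h1 (hapos t).le
        _ = a t * Real.exp S := by ring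
    exact lt_of_lt_of_le hpos (le_ciInf hub)
end

section
/- Fix γ > 0, m > 0, numbers e > 0, z₀ > 0, and S' > 0. Then there exists a unique S ∈ (0, e) satisfying S'·c_z(e − S, z₀) = S·c_y(e − S, z₀) − m·c(e − S, z₀)^γ. (Equivalently: the function f(S) := S'·c_z(e−S, z₀) − S·c_y(e−S, z₀) + m·c(e−S, z₀)^γ is strictly decreasing on [0,e), satisfies f(0) > 0 and f(S)·c(e−S,z₀)^{−γ} → −∞ as S → e⁻, and hence has a unique zero in (0,e).) -/
open Real Filter Set Topology

/-- Assumption C: `c` is a positive, homogeneous of degree 1, twice continuously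
differentiable function on `(0,∞)²` with partial derivatives `cy, cz > 0`, second partial
derivatives `cyy, czz < 0`, and Inada conditions. -/
structure AssumptionC (c cy cz cyy cyz czz : ℝ → ℝ → ℝ) : Prop where
  c_pos : ∀ ⦃y z : ℝ⦄, 0 < y → 0 < z → 0 < c y z
  homog : ∀ ⦃l y z : ℝ⦄, 0 < l → 0 < y → 0 < z → c (l * y) (l * z) = l * c y z
  hderiv_y : ∀ ⦃y z : ℝ⦄, 0 < y → 0 < z → HasDerivAt (fun u => c u z) (cy y z) y
  hderiv_z : ∀ ⦃y z : ℝ⦄, 0 < y → 0 < z → HasDerivAt (fun v => c y v) (cz y z) z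
  hderiv_yy : ∀ ⦃y z : ℝ⦄, 0 < y → 0 < z → HasDerivAt (fun u => cy u z) (cyy y z) y
  hderiv_yz : ∀ ⦃y z : ℝ⦄, 0 < y → 0 < z → HasDerivAt (fun v => cy y v) (cyz y z) z
  hderiv_zy : ∀ ⦃y z : ℝ⦄, 0 < y → 0 < z → HasDerivAt (fun u => cz u z) (cyz y z) y
  hderiv_zz : ∀ ⦃y z : ℝ⦄, 0 < y → 0 < z → HasDerivAt (fun v => cz y v) (czz y z) z
  cy_pos : ∀ ⦃y z : ℝ⦄, 0 < y → 0 < z → 0 < cy y z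
  cz_pos : ∀ ⦃y z : ℝ⦄, 0 < y → 0 < z → 0 < cz y z
  cyy_neg : ∀ ⦃y z : ℝ⦄, 0 < y → 0 < z → cyy y z < 0
  czz_neg : ∀ ⦃y z : ℝ⦄, 0 < y → 0 < z → czz y z < 0
  cont2 : ContinuousOn (fun p : ℝ × ℝ => (cyy p.1 p.2, cyz p.1 p.2, czz p.1 p.2))
    {p : ℝ × ℝ | 0 < p.1 ∧ 0 < p.2}
  inada_y : ∀ ⦃z : ℝ⦄, 0 < z → Tendsto (fun y => cy y z) (𝓝[>] (0:ℝ)) atTop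
  inada_z : ∀ ⦃y : ℝ⦄, 0 < y → Tendsto (fun z => cz y z) (𝓝[>] (0:ℝ)) atTop

/-!
The equation says `balance … S = 0`. Homogeneity of degree 1 makes `c_z` homogeneous of degree 0,
so `c_z(y₁, z) = c_z(y₂, z·y₂/y₁)`, and `c_zz < 0` then makes `c_z` increasing in `y`. With
`c_y > 0` and `c_yy < 0` every term of `balance` is nonincreasing in `S`, the middle one strictly,
so `balance` is strictly decreasing on `[0, e)`. It is positive at `0` and tends to `−∞` as
`S → e⁻` by the Inada condition in `y`; the intermediate value theorem gives the unique zero.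
-/

lemma strictMonoOn_Ioi_of_hasDerivAt_pos {f f' : ℝ → ℝ} {a : ℝ}
    (hf : ∀ x, a < x → HasDerivAt f (f' x) x) (hf' : ∀ x, a < x → 0 < f' x) :
    StrictMonoOn f (Ioi a) :=
  strictMonoOn_of_hasDerivWithinAt_pos (convex_Ioi a)
    (fun x hx => (hf x hx).continuousAt.continuousWithinAt)
    (fun x hx => by rw [interior_Ioi] at hx ⊢; exact (hf x hx).hasDerivWithinAt)
    (fun x hx => by rw [interior_Ioi] at hx; exact hf' x hx)

lemma strictAntiOn_Ioi_of_hasDerivAt_neg {f f' : ℝ → ℝ} {a : ℝ}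
    (hf : ∀ x, a < x → HasDerivAt f (f' x) x) (hf' : ∀ x, a < x → f' x < 0) :
    StrictAntiOn f (Ioi a) :=
  strictAntiOn_of_hasDerivWithinAt_neg (convex_Ioi a)
    (fun x hx => (hf x hx).continuousAt.continuousWithinAt)
    (fun x hx => by rw [interior_Ioi] at hx ⊢; exact (hf x hx).hasDerivWithinAt)
    (fun x hx => by rw [interior_Ioi] at hx; exact hf' x hx)

lemma existsUnique_mem_Ioo_eq_zero_of_strictAntiOn {f : ℝ → ℝ} {a b : ℝ} (hab : a < b)
    (hcont : ContinuousOn f (Ico a b)) (hanti : StrictAntiOn f (Ico a b)) (ha : 0 < f a)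
    (hb : Tendsto f (𝓝[<] b) atBot) :
    ∃! x, x ∈ Ioo a b ∧ f x = 0 := by
  obtain ⟨x₁, hfx₁, hx₁⟩ :=
    ((hb.eventually (eventually_lt_atBot 0)).and (Ioo_mem_nhdsLT hab)).exists
  obtain ⟨x, hx, hfx⟩ := intermediate_value_Ioo' hx₁.1.le
    (hcont.mono (Icc_subset_Ico_right hx₁.2)) ⟨hfx₁, ha⟩
  refine ⟨x, ⟨⟨hx.1, hx.2.trans hx₁.2⟩, hfx⟩, fun y ⟨hy, hfy⟩ => ?_⟩
  exact hanti.injOn (Ioo_subset_Ico_self hy) ⟨hx.1.le, hx.2.trans hx₁.2⟩ (hfy.trans hfx.symm)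

namespace AssumptionC

variable {c cy cz cyy cyz czz : ℝ → ℝ → ℝ} (hC : AssumptionC c cy cz cyy cyz czz)
include hC

lemma cz_mul_mul {l y z : ℝ} (hl : 0 < l) (hy : 0 < y) (hz : 0 < z) :
    cz (l * y) (l * z) = cz y z := by
  have hscaled : HasDerivAt (fun v => c (l * y) (l * v)) (cz (l * y) (l * z) * (l * 1)) z :=
    (hC.hderiv_z (by positivity) (by positivity)).comp z ((hasDerivAt_id z).const_mul l)
  have hhomog : (fun v => l * c y v) =ᶠ[𝓝 z] fun v => c (l * y) (l * v) := by
    filter_upwards [Ioi_mem_nhds hz] with v hv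
    exact (hC.homog hl hy hv).symm
  have h := (hscaled.congr_of_eventuallyEq hhomog).unique ((hC.hderiv_z hy hz).const_mul l)
  rw [mul_one, mul_comm] at h
  exact mul_left_cancel₀ hl.ne' h

lemma strictMonoOn_c {z : ℝ} (hz : 0 < z) : StrictMonoOn (fun y => c y z) (Ioi 0) :=
  strictMonoOn_Ioi_of_hasDerivAt_pos (fun _ hy => hC.hderiv_y hy hz)
    (fun _ hy => hC.cy_pos hy hz)

lemma strictAntiOn_cy {z : ℝ} (hz : 0 < z) : StrictAntiOn (fun y => cy y z) (Ioi 0) :=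
  strictAntiOn_Ioi_of_hasDerivAt_neg (fun _ hy => hC.hderiv_yy hy hz)
    (fun _ hy => hC.cyy_neg hy hz)

lemma strictAntiOn_cz_right {y : ℝ} (hy : 0 < y) : StrictAntiOn (fun z => cz y z) (Ioi 0) :=
  strictAntiOn_Ioi_of_hasDerivAt_neg (fun _ hz => hC.hderiv_zz hy hz)
    (fun _ hz => hC.czz_neg hy hz)

lemma strictMonoOn_cz {z : ℝ} (hz : 0 < z) : StrictMonoOn (fun y => cz y z) (Ioi 0) := by
  intro y₁ (hy₁ : 0 < y₁) y₂ (hy₂ : 0 < y₂) hlt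
  have hl : 1 < y₂ / y₁ := (one_lt_div hy₁).2 hlt
  calc cz y₁ z = cz (y₂ / y₁ * y₁) (y₂ / y₁ * z) := (hC.cz_mul_mul (by positivity) hy₁ hz).symm
    _ = cz y₂ (y₂ / y₁ * z) := by rw [div_mul_cancel₀ y₂ hy₁.ne']
    _ < cz y₂ z := hC.strictAntiOn_cz_right hy₂ hz (show 0 < y₂ / y₁ * z by positivity)
        (lt_mul_of_one_lt_left hz hl)

end AssumptionC

noncomputable def balance (c cy cz : ℝ → ℝ → ℝ) (γ m e z₀ S' S : ℝ) : ℝ :=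
  S' * cz (e - S) z₀ - S * cy (e - S) z₀ + m * c (e - S) z₀ ^ γ

namespace balance

variable {c cy cz cyy cyz czz : ℝ → ℝ → ℝ} {γ m e z₀ S' : ℝ}

lemma eq_zero_iff {S : ℝ} : balance c cy cz γ m e z₀ S' S = 0 ↔
    S' * cz (e - S) z₀ = S * cy (e - S) z₀ - m * c (e - S) z₀ ^ γ := by
  unfold balance
  constructor <;> intro h <;> linarith

lemma zero_pos (hC : AssumptionC c cy cz cyy cyz czz) (hm : 0 ≤ m) (he : 0 < e) (hz : 0 < z₀)
    (hS' : 0 < S') : 0 < balance c cy cz γ m e z₀ S' 0 := by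
  have hcz := hC.cz_pos he hz
  have hcγ := rpow_pos_of_pos (hC.c_pos he hz) γ
  simp only [balance, sub_zero, zero_mul]
  positivity

lemma continuousOn (hC : AssumptionC c cy cz cyy cyz czz) (hz : 0 < z₀) :
    ContinuousOn (balance c cy cz γ m e z₀ S') (Ico 0 e) := by
  intro S hS
  have hy : 0 < e - S := sub_pos.2 hS.2
  have hsub : ContinuousAt (fun S => e - S) S := by fun_prop
  have hc : ContinuousAt (fun S => c (e - S) z₀) S :=
    (hC.hderiv_y hy hz).continuousAt.comp (f := fun S => e - S) hsub
  have hcy : ContinuousAt (fun S => cy (e - S) z₀) S :=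
    (hC.hderiv_yy hy hz).continuousAt.comp (f := fun S => e - S) hsub
  have hcz : ContinuousAt (fun S => cz (e - S) z₀) S :=
    (hC.hderiv_zy hy hz).continuousAt.comp (f := fun S => e - S) hsub
  exact (((continuousAt_const.mul hcz).sub (continuousAt_id.mul hcy)).add
    (continuousAt_const.mul (hc.rpow_const (Or.inl (hC.c_pos hy hz).ne')))).continuousWithinAt

lemma strictAntiOn (hC : AssumptionC c cy cz cyy cyz czz) (hγ : 0 ≤ γ) (hm : 0 ≤ m)
    (hz : 0 < z₀) (hS' : 0 ≤ S') :
    StrictAntiOn (balance c cy cz γ m e z₀ S') (Ico 0 e) := by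
  intro S ⟨hS₀, hSe⟩ T ⟨_, hTe⟩ hST
  have hy : 0 < e - S := sub_pos.2 hSe
  have hy' : 0 < e - T := sub_pos.2 hTe
  have hyy' : e - T < e - S := by linarith
  have hcz := hC.strictMonoOn_cz hz hy' hy hyy'
  have hcy := hC.strictAntiOn_cy hz hy' hy hyy'
  have hc := rpow_le_rpow (hC.c_pos hy' hz).le (hC.strictMonoOn_c hz hy' hy hyy').le hγ
  simp only at hcz hcy
  unfold balance
  linarith [mul_le_mul_of_nonneg_left hcz.le hS', mul_le_mul_of_nonneg_left hcy.le hS₀,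
    mul_lt_mul_of_pos_right hST (hC.cy_pos hy' hz), mul_le_mul_of_nonneg_left hc hm]

lemma tendsto_nhdsLT_atBot (hC : AssumptionC c cy cz cyy cyz czz) (hγ : 0 ≤ γ) (hm : 0 ≤ m)
    (he : 0 < e) (hz : 0 < z₀) (hS' : 0 ≤ S') :
    Tendsto (balance c cy cz γ m e z₀ S') (𝓝[<] e) atBot := by
  have hgap : Tendsto (fun S => e - S) (𝓝[<] e) (𝓝[>] 0) :=
    map_subLeft_nhdsLT.trans_le (by rw [sub_self])
  have hprod : Tendsto (fun S => S * cy (e - S) z₀) (𝓝[<] e) atTop :=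
    (tendsto_id.mono_left nhdsWithin_le_nhds).pos_mul_atTop he ((hC.inada_y hz).comp hgap)
  set B := S' * cz e z₀ + m * c e z₀ ^ γ
  have hbound : balance c cy cz γ m e z₀ S' ≤ᶠ[𝓝[<] e] fun S => B + -(S * cy (e - S) z₀) := by
    filter_upwards [Ioo_mem_nhdsLT he] with S ⟨hS₀, hSe⟩
    have hy : 0 < e - S := sub_pos.2 hSe
    have hye : e - S < e := by linarith
    have hcz := hC.strictMonoOn_cz hz hy he hye
    have hc := rpow_le_rpow (hC.c_pos hy hz).le (hC.strictMonoOn_c hz hy he hye).le hγ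
    simp only at hcz
    unfold balance
    linarith [mul_le_mul_of_nonneg_left hcz.le hS', mul_le_mul_of_nonneg_left hc hm]
  exact tendsto_atBot_mono' _ hbound
    (tendsto_atBot_add_const_left _ B (tendsto_neg_atTop_atBot.comp hprod))

end balance

/-- Given `γ, m, e, z₀, S' > 0`, there exists a unique `S ∈ (0,e)` satisfying
`S'·c_z(e−S, z₀) = S·c_y(e−S, z₀) − m·c(e−S, z₀)^γ`. -/
theorem stmt_5 (c cy cz cyy cyz czz : ℝ → ℝ → ℝ)
    (hC : AssumptionC c cy cz cyy cyz czz) (γ m e z₀ S' : ℝ)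
    (hγ : 0 < γ) (hm : 0 < m) (he : 0 < e) (hz : 0 < z₀) (hS' : 0 < S') :
    ∃! S : ℝ, S ∈ Ioo 0 e ∧
      S' * cz (e - S) z₀ = S * cy (e - S) z₀ - m * c (e - S) z₀ ^ γ := by
  simp_rw [← balance.eq_zero_iff]
  exact existsUnique_mem_Ioo_eq_zero_of_strictAntiOn he (balance.continuousOn hC hz)
    (balance.strictAntiOn hC hγ.le hm.le hz hS'.le) (balance.zero_pos hC hm.le he hz hS')
    (balance.tendsto_nhdsLT_atBot hC hγ.le hm.le he hz hS'.le)
end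

section
/- (Backward induction lemma.) Let (e_t^y)_{t≥0} and (e_t^o)_{t≥0} be sequences of strictly positive reals, γ > 0, m > 0, and T ≥ 0. Call a sequence (S_t)_{t≥T} an equilibrium tail from T if 0 < S_t < e_t^y for all t ≥ T and S_{t+1}·c_z(y_t,z_t) = S_t·c_y(y_t,z_t) − m·c(y_t,z_t)^γ for all t ≥ T, where (y_t,z_t) := (e_t^y − S_t, e_{t+1}^o + S_{t+1}). Then for every equilibrium tail (S_t)_{t≥T} from T there exists a unique equilibrium tail (Ŝ_t)_{t≥0} from 0 such that Ŝ_t = S_t for all t ≥ T. -/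
open Real Filter Set Topology

/-- `S` is an equilibrium tail from `T`: for all `t ≥ T`, `0 < S_t < e_t^y` and
`S_{t+1}·c_z = S_t·c_y − m·c^γ` at `(y_t,z_t) = (e_t^y − S_t, e_{t+1}^o + S_{t+1})`. -/
def EqTail (c cy cz : ℝ → ℝ → ℝ) (ey eo : ℕ → ℝ) (γ m : ℝ) (T : ℕ) (S : ℕ → ℝ) : Prop :=
  ∀ t : ℕ, T ≤ t → 0 < S t ∧ S t < ey t ∧
    S (t + 1) * cz (ey t - S t) (eo (t + 1) + S (t + 1)) =
      S t * cy (ey t - S t) (eo (t + 1) + S (t + 1)) -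
        m * c (ey t - S t) (eo (t + 1) + S (t + 1)) ^ γ

lemma monotoneOn_Ioi_of_hasDerivAt_nonneg {f f' : ℝ → ℝ}
    (hf : ∀ x, 0 < x → HasDerivAt f (f' x) x) (hf' : ∀ x, 0 < x → 0 ≤ f' x) :
    MonotoneOn f (Ioi 0) :=
  monotoneOn_of_hasDerivWithinAt_nonneg (convex_Ioi 0)
    (fun x hx => (hf x hx).continuousAt.continuousWithinAt)
    (fun x hx => (hf x (by simpa using hx)).hasDerivWithinAt) (by simpa using hf')

lemma antitoneOn_Ioi_of_hasDerivAt_nonpos {f f' : ℝ → ℝ}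
    (hf : ∀ x, 0 < x → HasDerivAt f (f' x) x) (hf' : ∀ x, 0 < x → f' x ≤ 0) :
    AntitoneOn f (Ioi 0) :=
  antitoneOn_of_hasDerivWithinAt_nonpos (convex_Ioi 0)
    (fun x hx => (hf x hx).continuousAt.continuousWithinAt)
    (fun x hx => (hf x (by simpa using hx)).hasDerivWithinAt) (by simpa using hf')

lemma tendsto_const_sub_nhdsLT_nhdsGT (E : ℝ) :
    Tendsto (fun s : ℝ => E - s) (𝓝[<] E) (𝓝[>] 0) := by
  refine tendsto_nhdsWithin_of_tendsto_nhds_of_eventually_within _ ?_ ?_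
  · have : Tendsto (fun s : ℝ => E - s) (𝓝 E) (𝓝 (E - E)) :=
      tendsto_const_nhds.sub tendsto_id
    simpa using this.mono_left nhdsWithin_le_nhds
  · filter_upwards [self_mem_nhdsWithin] with s (hs : s < E)
    exact sub_pos.mpr hs

def IsSolutionFrom {α : Type*} (P : ℕ → α → α → Prop) (T : ℕ) (S : ℕ → α) : Prop :=
  ∀ t, T ≤ t → P t (S (t + 1)) (S t)

theorem IsSolutionFrom.existsUnique_extend {α : Type*} {P : ℕ → α → α → Prop} {Q : α → Prop}
    (hstep : ∀ t x, Q x → ∃! y, P t x y) (hQ : ∀ t x y, P t x y → Q y) {T : ℕ} {S : ℕ → α}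
    (hS : IsSolutionFrom P T S) :
    ∃! S' : ℕ → α, IsSolutionFrom P 0 S' ∧ ∀ t, T ≤ t → S' t = S t := by
  induction T generalizing S with
  | zero =>
    refine ⟨S, ⟨hS, fun _ _ => rfl⟩, fun S' ⟨_, hS'⟩ => funext fun t => hS' t t.zero_le⟩
  | succ T ih =>
    obtain ⟨y, hy, hyuniq⟩ := hstep T (S (T + 1)) (hQ _ _ _ (hS (T + 1) le_rfl))
    have hupdate : IsSolutionFrom P T (Function.update S T y) := by
      intro t ht
      rcases ht.eq_or_lt with rfl | ht
      · simpa [Function.update_of_ne (Nat.succ_ne_self T)] using hy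
      · simpa [Function.update_of_ne (Nat.succ_ne_self t).symm, Function.update_of_ne ht.ne',
          Function.update_of_ne (by omega : t + 1 ≠ T)] using hS t ht
    obtain ⟨S', ⟨hS'sol, hS'eq⟩, hS'uniq⟩ := ih hupdate
    refine ⟨S', ⟨hS'sol, fun t ht => ?_⟩, fun S'' ⟨hsol, heq⟩ => hS'uniq S'' ⟨hsol, ?_⟩⟩
    · rw [hS'eq t (by omega), Function.update_of_ne (by omega)]
    · intro t ht
      rcases ht.eq_or_lt with rfl | ht
      · rw [Function.update_self]
        exact hyuniq _ (heq (T + 1) le_rfl ▸ hsol T T.zero_le)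
      · rw [Function.update_of_ne ht.ne', heq t ht]

noncomputable def equilibriumResidual (c cy cz : ℝ → ℝ → ℝ) (γ m E z s' s : ℝ) : ℝ :=
  s * cy (E - s) z - m * c (E - s) z ^ γ - s' * cz (E - s) z

namespace AssumptionC

variable {c cy cz cyy cyz czz : ℝ → ℝ → ℝ} {γ m E z s' : ℝ}

lemma cz_homog (hC : AssumptionC c cy cz cyy cyz czz) {l y : ℝ} (hl : 0 < l) (hy : 0 < y)
    (hz : 0 < z) :
    cz (l * y) (l * z) = cz y z := by
  have hscaled : HasDerivAt (fun v => c (l * y) (l * v)) (cz (l * y) (l * z) * l) z :=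
    (hC.hderiv_z (by positivity) (by positivity)).comp z
      (by simpa using (hasDerivAt_id z).const_mul l)
  have hEq : (fun v => l * c y v) =ᶠ[𝓝 z] (fun v => c (l * y) (l * v)) := by
    filter_upwards [isOpen_Ioi.mem_nhds hz] with v hv
    exact (hC.homog hl hy hv).symm
  have := (hscaled.congr_of_eventuallyEq hEq).unique ((hC.hderiv_z hy hz).const_mul l)
  exact mul_right_cancel₀ hl.ne' (by linarith)

lemma monotoneOn_c (hC : AssumptionC c cy cz cyy cyz czz) (hz : 0 < z) :
    MonotoneOn (fun y => c y z) (Ioi 0) :=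
  monotoneOn_Ioi_of_hasDerivAt_nonneg (fun _ hy => hC.hderiv_y hy hz)
    (fun _ hy => (hC.cy_pos hy hz).le)

lemma antitoneOn_cy (hC : AssumptionC c cy cz cyy cyz czz) (hz : 0 < z) :
    AntitoneOn (fun y => cy y z) (Ioi 0) :=
  antitoneOn_Ioi_of_hasDerivAt_nonpos (fun _ hy => hC.hderiv_yy hy hz)
    (fun _ hy => (hC.cyy_neg hy hz).le)

lemma antitoneOn_cz (hC : AssumptionC c cy cz cyy cyz czz) {y : ℝ} (hy : 0 < y) :
    AntitoneOn (fun z => cz y z) (Ioi 0) :=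
  antitoneOn_Ioi_of_hasDerivAt_nonpos (fun _ hz => hC.hderiv_zz hy hz)
    (fun _ hz => (hC.czz_neg hy hz).le)

lemma monotoneOn_cz_left (hC : AssumptionC c cy cz cyy cyz czz) (hz : 0 < z) :
    MonotoneOn (fun y => cz y z) (Ioi 0) := by
  have hnorm : ∀ y : ℝ, 0 < y → cz y z = cz 1 (z / y) := fun y hy => by
    simpa [mul_div_cancel₀ z hy.ne'] using hC.cz_homog hy one_pos (div_pos hz hy)
  intro y₁ hy₁ y₂ hy₂ hle
  simp only [hnorm y₁ hy₁, hnorm y₂ hy₂]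
  exact hC.antitoneOn_cz one_pos (div_pos hz hy₂) (div_pos hz hy₁)
    (div_le_div_of_nonneg_left hz.le hy₁ hle)

lemma strictMonoOn_equilibriumResidual (hC : AssumptionC c cy cz cyy cyz czz) (hγ : 0 ≤ γ)
    (hm : 0 ≤ m) (hz : 0 < z) (hs' : 0 ≤ s') :
    StrictMonoOn (equilibriumResidual c cy cz γ m E z s') (Ico 0 E) := by
  intro s ⟨hs0, hsE⟩ t ⟨_, htE⟩ hst
  have hys : (0 : ℝ) < E - s := by linarith
  have hyt : (0 : ℝ) < E - t := by linarith
  have hyle : E - t ≤ E - s := by linarith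
  have hcy : cy (E - s) z ≤ cy (E - t) z := hC.antitoneOn_cy hz hyt hys hyle
  have hc : c (E - t) z ^ γ ≤ c (E - s) z ^ γ :=
    rpow_le_rpow (hC.c_pos hyt hz).le (hC.monotoneOn_c hz hyt hys hyle) hγ
  have hcz : cz (E - t) z ≤ cz (E - s) z := hC.monotoneOn_cz_left hz hyt hys hyle
  have hcyt := hC.cy_pos hyt hz
  unfold equilibriumResidual
  nlinarith [mul_le_mul_of_nonneg_left hcy hs0, mul_le_mul_of_nonneg_left hc hm,
    mul_le_mul_of_nonneg_left hcz hs']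

lemma continuousOn_equilibriumResidual (hC : AssumptionC c cy cz cyy cyz czz) (hz : 0 < z) :
    ContinuousOn (equilibriumResidual c cy cz γ m E z s') (Iio E) := by
  intro s (hs : s < E)
  have hy : 0 < E - s := sub_pos.mpr hs
  have hsub : ContinuousAt (fun s : ℝ => E - s) s := continuousAt_const.sub continuousAt_id
  have hc : ContinuousAt (fun s => c (E - s) z) s :=
    (hC.hderiv_y hy hz).continuousAt.comp hsub
  refine ContinuousAt.continuousWithinAt ?_
  exact (continuousAt_id.mul ((hC.hderiv_yy hy hz).continuousAt.comp hsub)).sub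
    (continuousAt_const.mul (hc.rpow_const (Or.inl (hC.c_pos hy hz).ne'))) |>.sub
    (continuousAt_const.mul ((hC.hderiv_zy hy hz).continuousAt.comp hsub))

lemma equilibriumResidual_zero_neg (hC : AssumptionC c cy cz cyy cyz czz) (hm : 0 ≤ m)
    (hE : 0 < E) (hz : 0 < z) (hs' : 0 < s') :
    equilibriumResidual c cy cz γ m E z s' 0 < 0 := by
  have hc := rpow_pos_of_pos (hC.c_pos (sub_pos.mpr hE) hz) γ
  have hcz := hC.cz_pos (sub_pos.mpr hE) hz
  unfold equilibriumResidual
  nlinarith [mul_pos hs' hcz]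

lemma eventually_equilibriumResidual_pos (hC : AssumptionC c cy cz cyy cyz czz) (hγ : 0 ≤ γ)
    (hm : 0 ≤ m) (hE : 0 < E) (hz : 0 < z) (hs' : 0 ≤ s') :
    ∀ᶠ s in 𝓝[<] E, 0 < equilibriumResidual c cy cz γ m E z s' s := by
  have hblowup : Tendsto (fun s => E / 2 * cy (E - s) z) (𝓝[<] E) atTop :=
    ((hC.inada_y hz).comp (tendsto_const_sub_nhdsLT_nhdsGT E)).const_mul_atTop (by positivity)
  filter_upwards [hblowup.eventually_gt_atTop (m * c E z ^ γ + s' * cz E z),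
    Ioo_mem_nhdsLT (show E / 2 < E by linarith)] with s hlarge ⟨hs2, hsE⟩
  have hy : 0 < E - s := sub_pos.mpr hsE
  have hyle : E - s ≤ E := by linarith
  have hc : c (E - s) z ^ γ ≤ c E z ^ γ :=
    rpow_le_rpow (hC.c_pos hy hz).le (hC.monotoneOn_c hz hy hE hyle) hγ
  have hcz : cz (E - s) z ≤ cz E z := hC.monotoneOn_cz_left hz hy hE hyle
  have hcy := hC.cy_pos hy hz
  unfold equilibriumResidual
  nlinarith [mul_le_mul_of_nonneg_left hc hm, mul_le_mul_of_nonneg_left hcz hs']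

lemma existsUnique_savings (hC : AssumptionC c cy cz cyy cyz czz) (hγ : 0 < γ) (hm : 0 < m)
    (hE : 0 < E) (hz : 0 < z) (hs' : 0 < s') :
    ∃! s, 0 < s ∧ s < E ∧
      s' * cz (E - s) z = s * cy (E - s) z - m * c (E - s) z ^ γ := by
  set f := equilibriumResidual c cy cz γ m E z s'
  have hf : ∀ s, s' * cz (E - s) z = s * cy (E - s) z - m * c (E - s) z ^ γ ↔ f s = 0 :=
    fun s => by simp only [f, equilibriumResidual]; constructor <;> intro h <;> linarith
  simp only [hf]
  obtain ⟨s₁, hfs₁, hs₁⟩ := ((hC.eventually_equilibriumResidual_pos hγ.le hm.le hE hz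
    hs'.le).and (Ioo_mem_nhdsLT hE)).exists
  obtain ⟨s₀, hs₀, hfs₀⟩ := intermediate_value_Ioo hs₁.1.le
    ((hC.continuousOn_equilibriumResidual hz).mono fun s hs => lt_of_le_of_lt hs.2 hs₁.2)
    ⟨hC.equilibriumResidual_zero_neg hm.le hE hz hs', hfs₁⟩
  have hmono := hC.strictMonoOn_equilibriumResidual (E := E) hγ.le hm.le hz hs'.le
  refine ⟨s₀, ⟨hs₀.1, hs₀.2.trans hs₁.2, hfs₀⟩, fun s ⟨hs, hsE, hfs⟩ => ?_⟩
  exact hmono.injOn ⟨hs.le, hsE⟩ ⟨hs₀.1.le, hs₀.2.trans hs₁.2⟩ (hfs.trans hfs₀.symm)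

end AssumptionC

/-- Backward induction lemma: every equilibrium tail from `T` extends uniquely to an
equilibrium tail from `0`. -/
theorem stmt_6 (c cy cz cyy cyz czz : ℝ → ℝ → ℝ)
    (hC : AssumptionC c cy cz cyy cyz czz) (ey eo : ℕ → ℝ)
    (hey : ∀ t, 0 < ey t) (heo : ∀ t, 0 < eo t) (γ m : ℝ) (hγ : 0 < γ) (hm : 0 < m)
    (T : ℕ) (S : ℕ → ℝ) (hS : EqTail c cy cz ey eo γ m T S) :
    ∃! Shat : ℕ → ℝ, EqTail c cy cz ey eo γ m 0 Shat ∧ ∀ t : ℕ, T ≤ t → Shat t = S t :=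
  IsSolutionFrom.existsUnique_extend (Q := (0 < ·))
    (P := fun t s' s => 0 < s ∧ s < ey t ∧ s' * cz (ey t - s) (eo (t + 1) + s') =
      s * cy (ey t - s) (eo (t + 1) + s') - m * c (ey t - s) (eo (t + 1) + s') ^ γ)
    (fun t _ hs' => hC.existsUnique_savings hγ hm (hey t) (add_pos (heo (t + 1)) hs') hs')
    (fun _ _ _ h => h.1) hS
end

section
/- Suppose G > 1 and 0 < γ < 1. Then there exists a unique w_f^* > 0 satisfying c_y(1, G·w_f^*)/c_z(1, G·w_f^*) = G^γ. -/
/-!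
Since `c` is homogeneous of degree one, `cy` is homogeneous of degree zero, so
`cy y z = cy (y / z) 1`. Hence `cyy < 0` makes `z ↦ cy y z` strictly increasing and the
Inada condition in `y` sends it to `∞` as `z → ∞`; `czz < 0` makes `z ↦ cz y z` strictly
decreasing, and the Inada condition in `z` sends it to `∞` as `z → 0⁺`. The ratio
`z ↦ cy 1 z / cz 1 z` is therefore a continuous increasing bijection of `(0, ∞)` onto itself,
so it takes the value `G ^ γ` at exactly one `z`, and `w = z / G`.
-/

open Real Filter Set Topology

namespace AssumptionC

variable {c cy cz cyy cyz czz : ℝ → ℝ → ℝ} (hC : AssumptionC c cy cz cyy cyz czz)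
include hC

lemma cy_mul_mul {l y z : ℝ} (hl : 0 < l) (hy : 0 < y) (hz : 0 < z) :
    cy (l * y) (l * z) = cy y z := by
  have hscaled : HasDerivAt (fun u => c (l * u) (l * z)) (cy (l * y) (l * z) * l) y :=
    (hC.hderiv_y (mul_pos hl hy) (mul_pos hl hz)).comp y
      ((hasDerivAt_id y).const_mul l |>.congr_deriv (mul_one l))
  have hhomog : (fun u => l * c u z) =ᶠ[𝓝 y] fun u => c (l * u) (l * z) := by
    filter_upwards [eventually_gt_nhds hy] with u hu
    exact (hC.homog hl hu hz).symm
  have hderiv_eq :=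
    (hscaled.congr_of_eventuallyEq hhomog).unique ((hC.hderiv_y hy hz).const_mul l)
  exact mul_left_cancel₀ hl.ne' (by linarith)

lemma cy_eq_cy_div_one {y z : ℝ} (hy : 0 < y) (hz : 0 < z) : cy y z = cy (y / z) 1 := by
  have h := hC.cy_mul_mul (inv_pos.mpr hz) hy hz
  rwa [inv_mul_cancel₀ hz.ne', inv_mul_eq_div, eq_comm] at h

lemma cyz_pos {y z : ℝ} (hy : 0 < y) (hz : 0 < z) : 0 < cyz y z := by
  have hyz : 0 < y / z := div_pos hy hz
  have hcomp : HasDerivAt (fun v => cy (y / v) 1) (cyy (y / z) 1 * (y * -(z ^ 2)⁻¹)) z := by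
    exact (hC.hderiv_yy hyz one_pos).comp z <|
      ((hasDerivAt_inv hz.ne').const_mul y).congr_of_eventuallyEq
        (.of_forall fun v => div_eq_mul_inv y v)
  have hcy : (fun v => cy y v) =ᶠ[𝓝 z] fun v => cy (y / v) 1 := by
    filter_upwards [eventually_gt_nhds hz] with v hv
    exact hC.cy_eq_cy_div_one hy hv
  rw [(hC.hderiv_yz hy hz).unique (hcomp.congr_of_eventuallyEq hcy)]
  have hcyy := hC.cyy_neg hyz one_pos
  have hpos : 0 < y * (z ^ 2)⁻¹ := by positivity
  nlinarith

lemma strictMonoOn_cy {y : ℝ} (hy : 0 < y) : StrictMonoOn (cy y) (Ioi 0) := by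
  refine strictMonoOn_of_deriv_pos (convex_Ioi 0)
    (fun z hz => (hC.hderiv_yz hy hz).continuousAt.continuousWithinAt) fun z hz => ?_
  rw [interior_Ioi] at hz
  rw [(hC.hderiv_yz hy hz).deriv]
  exact hC.cyz_pos hy hz

lemma strictAntiOn_cz {y : ℝ} (hy : 0 < y) : StrictAntiOn (cz y) (Ioi 0) := by
  refine strictAntiOn_of_deriv_neg (convex_Ioi 0)
    (fun z hz => (hC.hderiv_zz hy hz).continuousAt.continuousWithinAt) fun z hz => ?_
  rw [interior_Ioi] at hz
  rw [(hC.hderiv_zz hy hz).deriv]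
  exact hC.czz_neg hy hz

lemma continuousOn_cy_div_cz {y : ℝ} (hy : 0 < y) :
    ContinuousOn (fun z => cy y z / cz y z) (Ioi 0) := fun _ hz =>
  ((hC.hderiv_yz hy hz).continuousAt.div (hC.hderiv_zz hy hz).continuousAt
    (hC.cz_pos hy hz).ne').continuousWithinAt

lemma strictMonoOn_cy_div_cz {y : ℝ} (hy : 0 < y) :
    StrictMonoOn (fun z => cy y z / cz y z) (Ioi 0) := fun _ ha _ hb hab =>
  div_lt_div₀ (hC.strictMonoOn_cy hy ha hb hab) (hC.strictAntiOn_cz hy ha hb hab).le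
    (hC.cy_pos hy hb).le (hC.cz_pos hy hb)

lemma tendsto_cy_atTop {y : ℝ} (hy : 0 < y) : Tendsto (cy y) atTop atTop := by
  have hdiv : Tendsto (fun z => y / z) atTop (𝓝[>] 0) :=
    tendsto_nhdsWithin_iff.mpr ⟨tendsto_const_nhds.div_atTop tendsto_id,
      (eventually_gt_atTop 0).mono fun z hz => div_pos hy hz⟩
  refine ((hC.inada_y one_pos).comp hdiv).congr' ?_
  filter_upwards [eventually_gt_atTop 0] with z hz
  exact (hC.cy_eq_cy_div_one hy hz).symm

lemma tendsto_cy_div_cz_atTop {y : ℝ} (hy : 0 < y) :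
    Tendsto (fun z => cy y z / cz y z) atTop atTop := by
  refine tendsto_atTop_mono' _ ?_
    ((hC.tendsto_cy_atTop hy).atTop_div_const (hC.cz_pos hy one_pos))
  filter_upwards [eventually_gt_atTop 1] with z hz
  have hz0 : (0 : ℝ) < z := one_pos.trans hz
  exact div_le_div_of_nonneg_left (hC.cy_pos hy hz0).le (hC.cz_pos hy hz0)
    (hC.strictAntiOn_cz hy (mem_Ioi.mpr one_pos) hz0 hz).le

lemma tendsto_cy_div_cz_nhdsGT_zero {y : ℝ} (hy : 0 < y) :
    Tendsto (fun z => cy y z / cz y z) (𝓝[>] 0) (𝓝 0) := by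
  have hupper : Tendsto (fun z => cy y 1 / cz y z) (𝓝[>] 0) (𝓝 0) :=
    tendsto_const_nhds.div_atTop (hC.inada_z hy)
  have hsmall : ∀ᶠ z in 𝓝[>] (0 : ℝ), z ∈ Ioo 0 1 := Ioo_mem_nhdsGT one_pos
  refine tendsto_of_tendsto_of_tendsto_of_le_of_le' tendsto_const_nhds hupper ?_ ?_
  · filter_upwards [hsmall] with z hz
    exact (div_pos (hC.cy_pos hy hz.1) (hC.cz_pos hy hz.1)).le
  · filter_upwards [hsmall] with z hz
    exact div_le_div_of_nonneg_right
      (hC.strictMonoOn_cy hy (mem_Ioi.mpr hz.1) (mem_Ioi.mpr one_pos) hz.2).le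
      (hC.cz_pos hy hz.1).le

end AssumptionC

theorem existsUnique_pos_eq_of_strictMonoOn_Ioi {F : ℝ → ℝ} (hcont : ContinuousOn F (Ioi 0))
    (hmono : StrictMonoOn F (Ioi 0)) (hzero : Tendsto F (𝓝[>] 0) (𝓝 0))
    (htop : Tendsto F atTop atTop) {a : ℝ} (ha : 0 < a) : ∃! z, 0 < z ∧ F z = a := by
  obtain ⟨z₁, hFz₁, hz₁⟩ :=
    ((hzero.eventually (gt_mem_nhds ha)).and self_mem_nhdsWithin).exists
  obtain ⟨z₂, hFz₂, hz₂⟩ :=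
    ((htop.eventually_ge_atTop a).and (eventually_gt_atTop 0)).exists
  obtain ⟨z, hz, hFz⟩ := hcont.surjOn_Icc hz₁ (mem_Ioi.mpr hz₂) ⟨hFz₁.le, hFz₂⟩
  exact ⟨z, ⟨hz, hFz⟩, fun w ⟨hw, hFw⟩ => hmono.injOn hw hz (hFw.trans hFz.symm)⟩

theorem stmt_10_general (c cy cz cyy cyz czz : ℝ → ℝ → ℝ)
    (hC : AssumptionC c cy cz cyy cyz czz) (G γ : ℝ)
    (hG : 1 < G) :
    ∃! w : ℝ, 0 < w ∧ cy 1 (G * w) / cz 1 (G * w) = G ^ γ := by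
  have hG0 : 0 < G := one_pos.trans hG
  obtain ⟨z, ⟨hz, hFz⟩, huniq⟩ := existsUnique_pos_eq_of_strictMonoOn_Ioi
    (hC.continuousOn_cy_div_cz one_pos) (hC.strictMonoOn_cy_div_cz one_pos)
    (hC.tendsto_cy_div_cz_nhdsGT_zero one_pos) (hC.tendsto_cy_div_cz_atTop one_pos)
    (rpow_pos_of_pos hG0 γ)
  refine ⟨z / G, ⟨div_pos hz hG0, by rwa [mul_div_cancel₀ z hG0.ne']⟩, ?_⟩
  rintro w ⟨hw, hFw⟩
  rw [eq_div_iff hG0.ne', mul_comm]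
  exact huniq _ ⟨mul_pos hG0 hw, hFw⟩

/-- If `G > 1` and `0 < γ < 1`, there is a unique `w_f^* > 0` with
`c_y(1, G·w_f^*)/c_z(1, G·w_f^*) = G^γ`. -/
theorem stmt_10 (c cy cz cyy cyz czz : ℝ → ℝ → ℝ)
    (hC : AssumptionC c cy cz cyy cyz czz) (G γ : ℝ)
    (hG : 1 < G) (hγ0 : 0 < γ) (hγ1 : γ < 1) :
    ∃! w : ℝ, 0 < w ∧ cy 1 (G * w) / cz 1 (G * w) = G ^ γ :=
  stmt_10_general c cy cz cyy cyz czz hC G γ hG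
end

section
/- (Asymptotics of the bubbly long run equilibrium.) Suppose 0 < γ < 1 and w < w_b^*, where w_b^* > 0 is the unique solution of c_y(1,G·w_b^*)/c_z(1,G·w_b^*) = G; let s* := (w_b^* − w)/(w_b^* + 1) ∈ (0,1) and (y*,z*) := (1−s*, G·(w+s*)). If (S_t) is an equilibrium with S_t/(e1·G^t) → s*, then: r_t/(e1^γ·G^{γ·t}) → m·c(y*,z*)^γ/c_y(y*,z*); P_t/(e1·G^t) → s*; R_t → G; the price-rent ratio P_t/r_t diverges to ∞; and ∑_{t=1}^∞ r_t/P_t < ∞, so the housing price contains a bubble. -/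
open Real Filter Set Topology

/-- An equilibrium: `0 < S t < e1·G^t` and the difference equation
`S_{t+1}·c_z = S_t·c_y − m·c^γ` at `(y_t, z_t) = (e1·G^t − S_t, e2·G^{t+1} + S_{t+1})`. -/
def IsEquilibrium (c cy cz : ℝ → ℝ → ℝ) (e1 e2 G γ m : ℝ) (S : ℕ → ℝ) : Prop :=
  ∀ t : ℕ, 0 < S t ∧ S t < e1 * G ^ t ∧
    S (t + 1) * cz (e1 * G ^ t - S t) (e2 * G ^ (t + 1) + S (t + 1)) =
      S t * cy (e1 * G ^ t - S t) (e2 * G ^ (t + 1) + S (t + 1)) -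
        m * c (e1 * G ^ t - S t) (e2 * G ^ (t + 1) + S (t + 1)) ^ γ

/-- The rent `r_t = m·c(y_t,z_t)^γ / c_y(y_t,z_t)`. -/
noncomputable def rent (c cy : ℝ → ℝ → ℝ) (e1 e2 G γ m : ℝ) (S : ℕ → ℝ) (t : ℕ) : ℝ :=
  m * c (e1 * G ^ t - S t) (e2 * G ^ (t + 1) + S (t + 1)) ^ γ /
    cy (e1 * G ^ t - S t) (e2 * G ^ (t + 1) + S (t + 1))

/-- The housing price `P_t = S_t − r_t`. -/
noncomputable def price (c cy : ℝ → ℝ → ℝ) (e1 e2 G γ m : ℝ) (S : ℕ → ℝ) (t : ℕ) : ℝ :=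
  S t - rent c cy e1 e2 G γ m S t

/-- The gross interest rate `R_t = S_{t+1}/P_t`. -/
noncomputable def irate (c cy : ℝ → ℝ → ℝ) (e1 e2 G γ m : ℝ) (S : ℕ → ℝ) (t : ℕ) : ℝ :=
  S (t + 1) / price c cy e1 e2 G γ m S t

/-!
Along an equilibrium put `N_t := e1·G^t`. By homogeneity of `c` (and degree-zero homogeneity
of `c_y`), the rent at `(y_t, z_t) = N_t·(a_t, b_t)` equals `N_t^γ` times the rent at
`(a_t, b_t)`, and `(a_t, b_t) → (y*, z*)` because `S_t/N_t → s*`. So the rent grows like `N_t^γ`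
while `S_t` grows like `N_t`; as `γ < 1` the rent is negligible, `P_t ~ S_t`,
`R_t = S_{t+1}/P_t → G`, and `r_t/P_t = O(N_t^{γ-1})` is dominated by a convergent geometric
series.
-/

open Asymptotics

noncomputable def rentAt (c cy : ℝ → ℝ → ℝ) (γ m y z : ℝ) : ℝ :=
  m * c y z ^ γ / cy y z

theorem continuousAt_uncurry_of_homogeneous {f : ℝ → ℝ → ℝ} (k : ℕ)
    (hf : ∀ ⦃l y z : ℝ⦄, 0 < l → 0 < y → 0 < z → f (l * y) (l * z) = l ^ k * f y z)
    (hf₁ : ∀ ⦃u : ℝ⦄, 0 < u → ContinuousAt (fun u => f u 1) u) {y z : ℝ}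
    (hy : 0 < y) (hz : 0 < z) :
    ContinuousAt (fun p : ℝ × ℝ => f p.1 p.2) (y, z) := by
  have hquadrant : {p : ℝ × ℝ | 0 < p.1 ∧ 0 < p.2} ∈ 𝓝 (y, z) :=
    ((isOpen_lt continuous_const continuous_fst).inter
      (isOpen_lt continuous_const continuous_snd)).mem_nhds ⟨hy, hz⟩
  have hdehomogenize :
      (fun p : ℝ × ℝ => p.2 ^ k * f (p.1 / p.2) 1) =ᶠ[𝓝 (y, z)] fun p => f p.1 p.2 := by
    filter_upwards [hquadrant] with p ⟨hp₁, hp₂⟩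
    rw [← hf hp₂ (div_pos hp₁ hp₂) one_pos, mul_div_cancel₀ _ hp₂.ne', mul_one]
  have hquotient : ContinuousAt (fun p : ℝ × ℝ => p.1 / p.2) (y, z) :=
    continuousAt_fst.div continuousAt_snd hz.ne'
  exact ((continuousAt_snd.pow k).mul
    ((hf₁ (div_pos hy hz)).comp_of_eq hquotient rfl)).congr hdehomogenize

section AssumptionC

variable {c cy cz cyy cyz czz : ℝ → ℝ → ℝ}

theorem AssumptionC.cy_mul (hC : AssumptionC c cy cz cyy cyz czz) {l y z : ℝ}
    (hl : 0 < l) (hy : 0 < y) (hz : 0 < z) : cy (l * y) (l * z) = cy y z := by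
  have hchain : HasDerivAt (fun u => c (l * u) (l * z)) (cy (l * y) (l * z) * l) y := by
    simpa [Function.comp_def] using
      (hC.hderiv_y (mul_pos hl hy) (mul_pos hl hz)).comp y ((hasDerivAt_id y).const_mul l)
  have hscaled : HasDerivAt (fun u => c (l * u) (l * z)) (l * cy y z) y := by
    refine ((hC.hderiv_y hy hz).const_mul l).congr_of_eventuallyEq ?_
    filter_upwards [Ioi_mem_nhds hy] with u hu using hC.homog hl hu hz
  exact (mul_left_cancel₀ hl.ne' ((hscaled.unique hchain).trans (mul_comm _ _))).symm

theorem AssumptionC.continuousAt_c (hC : AssumptionC c cy cz cyy cyz czz) {y z : ℝ}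
    (hy : 0 < y) (hz : 0 < z) : ContinuousAt (fun p : ℝ × ℝ => c p.1 p.2) (y, z) :=
  continuousAt_uncurry_of_homogeneous 1
    (fun _ _ _ hl hy hz => by rw [pow_one]; exact hC.homog hl hy hz)
    (fun _ hu => (hC.hderiv_y hu one_pos).continuousAt) hy hz

theorem AssumptionC.continuousAt_cy (hC : AssumptionC c cy cz cyy cyz czz) {y z : ℝ}
    (hy : 0 < y) (hz : 0 < z) : ContinuousAt (fun p : ℝ × ℝ => cy p.1 p.2) (y, z) :=
  continuousAt_uncurry_of_homogeneous 0
    (fun _ _ _ hl hy hz => by rw [pow_zero, one_mul]; exact hC.cy_mul hl hy hz)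
    (fun _ hu => (hC.hderiv_yy hu one_pos).continuousAt) hy hz

theorem AssumptionC.rentAt_mul (hC : AssumptionC c cy cz cyy cyz czz) (γ m : ℝ) {l y z : ℝ}
    (hl : 0 < l) (hy : 0 < y) (hz : 0 < z) :
    rentAt c cy γ m (l * y) (l * z) = l ^ γ * rentAt c cy γ m y z := by
  unfold rentAt
  rw [hC.homog hl hy hz, hC.cy_mul hl hy hz, mul_rpow hl.le (hC.c_pos hy hz).le]
  ring

theorem AssumptionC.rentAt_pos (hC : AssumptionC c cy cz cyy cyz czz) {γ m y z : ℝ}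
    (hm : 0 < m) (hy : 0 < y) (hz : 0 < z) : 0 < rentAt c cy γ m y z :=
  div_pos (mul_pos hm (rpow_pos_of_pos (hC.c_pos hy hz) γ)) (hC.cy_pos hy hz)

theorem AssumptionC.continuousAt_rentAt (hC : AssumptionC c cy cz cyy cyz czz) (γ m : ℝ)
    {y z : ℝ} (hy : 0 < y) (hz : 0 < z) :
    ContinuousAt (fun p : ℝ × ℝ => rentAt c cy γ m p.1 p.2) (y, z) :=
  (continuousAt_const.mul ((hC.continuousAt_c hy hz).rpow_const
    (Or.inl (hC.c_pos hy hz).ne'))).div (hC.continuousAt_cy hy hz) (hC.cy_pos hy hz).ne'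

end AssumptionC

section GrowthRates

variable {N P r S : ℕ → ℝ} {γ s L : ℝ}

theorem tendsto_div_nhds_zero_of_tendsto_div_rpow (hγ : γ < 1)
    (hN : Tendsto N atTop atTop) (hr : Tendsto (fun t => r t / N t ^ γ) atTop (𝓝 L)) :
    Tendsto (fun t => r t / N t) atTop (𝓝 0) := by
  have hdecay : Tendsto (fun t => N t ^ (γ - 1)) atTop (𝓝 0) := by
    simpa only [neg_sub, Function.comp_def] using (tendsto_rpow_neg_atTop (sub_pos.2 hγ)).comp hN
  have hlim := hr.mul hdecay
  rw [mul_zero] at hlim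
  refine hlim.congr' ?_
  filter_upwards [hN.eventually_gt_atTop 0] with t ht
  rw [rpow_sub_one ht.ne']
  field_simp

theorem tendsto_div_atTop_of_tendsto_div_rpow (hγ : γ < 1) (hN : Tendsto N atTop atTop)
    (hP : Tendsto (fun t => P t / N t) atTop (𝓝 s)) (hs : 0 < s)
    (hr : Tendsto (fun t => r t / N t ^ γ) atTop (𝓝 L)) (hL : 0 < L) :
    Tendsto (fun t => P t / r t) atTop atTop := by
  have hgrowth : Tendsto (fun t => N t ^ (1 - γ)) atTop atTop :=
    (tendsto_rpow_atTop (sub_pos.2 hγ)).comp hN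
  refine ((hP.div hr hL.ne').pos_mul_atTop (div_pos hs hL) hgrowth).congr' ?_
  filter_upwards [hN.eventually_gt_atTop 0, hr.eventually_ne hL.ne'] with t ht hrt
  have hrt : r t ≠ 0 := (div_ne_zero_iff.1 hrt).1
  rw [Pi.div_apply, rpow_sub ht, rpow_one]
  field_simp

theorem summable_div_of_tendsto_div_rpow (hN : Tendsto N atTop atTop)
    (hP : Tendsto (fun t => P t / N t) atTop (𝓝 s)) (hs : s ≠ 0)
    (hr : Tendsto (fun t => r t / N t ^ γ) atTop (𝓝 L))
    (hsum : Summable fun t => N t ^ (γ - 1)) :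
    Summable fun t => r t / P t := by
  refine summable_of_isBigO_nat hsum ?_
  have hbound : (fun t => (r t / N t ^ γ) / (P t / N t) * N t ^ (γ - 1)) =O[atTop]
      fun t => N t ^ (γ - 1) := by
    simpa only [one_mul, Pi.div_apply] using ((hr.div hP hs).isBigO_one ℝ).mul (isBigO_refl (fun t => N t ^ (γ - 1)) _)
  refine hbound.congr' ?_ EventuallyEq.rfl
  filter_upwards [hN.eventually_gt_atTop 0, hP.eventually_ne hs] with t ht hPt
  have hPt : P t ≠ 0 := (div_ne_zero_iff.1 hPt).1
  rw [rpow_sub_one ht.ne']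
  field_simp

theorem tendsto_succ_div_of_tendsto_div {G : ℝ} (hN : Tendsto N atTop atTop)
    (hNG : ∀ t, N (t + 1) = G * N t) (hS : Tendsto (fun t => S t / N t) atTop (𝓝 s))
    (hP : Tendsto (fun t => P t / N t) atTop (𝓝 s)) (hs : s ≠ 0) :
    Tendsto (fun t => S (t + 1) / P t) atTop (𝓝 G) := by
  have hlim := ((hS.comp (tendsto_add_atTop_nat 1)).div hP hs).mul_const G
  rw [div_self hs, one_mul] at hlim
  refine hlim.congr' ?_
  filter_upwards [(hN.comp (tendsto_add_atTop_nat 1)).eventually_gt_atTop 0,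
    hP.eventually_ne hs] with t hNt hPt
  simp only [Pi.div_apply, Function.comp_apply, hNG] at hNt ⊢
  have hG : G ≠ 0 := left_ne_zero_of_mul hNt.ne'
  have hNt : N t ≠ 0 := right_ne_zero_of_mul hNt.ne'
  have hPt : P t ≠ 0 := (div_ne_zero_iff.1 hPt).1
  field_simp

end GrowthRates

theorem tendsto_mul_pow_atTop {e G : ℝ} (he : 0 < e) (hG : 1 < G) :
    Tendsto (fun t : ℕ => e * G ^ t) atTop atTop :=
  (tendsto_pow_atTop_atTop_of_one_lt hG).const_mul_atTop he

theorem summable_mul_pow_rpow {e G p : ℝ} (he : 0 < e) (hG : 1 < G) (hp : p < 0) :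
    Summable fun t : ℕ => (e * G ^ t) ^ p := by
  have hG₀ : 0 ≤ G := zero_le_one.trans hG.le
  refine ((summable_geometric_of_lt_one (rpow_nonneg hG₀ p)
    (rpow_lt_one_of_one_lt_of_neg hG hp)).mul_left (e ^ p)).congr fun t => ?_
  rw [mul_rpow he.le (pow_nonneg hG₀ t), rpow_pow_comm hG₀]

section Equilibrium

variable {c cy cz cyy cyz czz : ℝ → ℝ → ℝ} {e1 e2 G γ m : ℝ} {S : ℕ → ℝ}

theorem IsEquilibrium.rent_eq (hS : IsEquilibrium c cy cz e1 e2 G γ m S)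
    (hC : AssumptionC c cy cz cyy cyz czz) (he1 : 0 < e1) (he2 : 0 < e2) (hG : 0 < G) (t : ℕ) :
    rent c cy e1 e2 G γ m S t = (e1 * G ^ t) ^ γ * rentAt c cy γ m
      (1 - S t / (e1 * G ^ t)) (G * (e2 / e1 + S (t + 1) / (e1 * G ^ (t + 1)))) := by
  have hN : 0 < e1 * G ^ t := mul_pos he1 (pow_pos hG t)
  have ha : 0 < 1 - S t / (e1 * G ^ t) := by
    rw [sub_pos, div_lt_one hN]; exact (hS t).2.1
  have hb : 0 < G * (e2 / e1 + S (t + 1) / (e1 * G ^ (t + 1))) :=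
    mul_pos hG (add_pos (div_pos he2 he1) (div_pos (hS (t + 1)).1 (mul_pos he1 (pow_pos hG _))))
  have hy : e1 * G ^ t - S t = e1 * G ^ t * (1 - S t / (e1 * G ^ t)) := by field_simp
  have hz : e2 * G ^ (t + 1) + S (t + 1) =
      e1 * G ^ t * (G * (e2 / e1 + S (t + 1) / (e1 * G ^ (t + 1)))) := by
    field_simp; ring
  show rentAt c cy γ m _ _ = _
  rw [hy, hz, hC.rentAt_mul γ m hN ha hb]

theorem IsEquilibrium.tendsto_rent_div_rpow (hS : IsEquilibrium c cy cz e1 e2 G γ m S)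
    (hC : AssumptionC c cy cz cyy cyz czz) (he1 : 0 < e1) (he2 : 0 < e2) (hG : 0 < G)
    {s : ℝ} (hs : s < 1) (hconv : Tendsto (fun t => S t / (e1 * G ^ t)) atTop (𝓝 s)) :
    Tendsto (fun t => rent c cy e1 e2 G γ m S t / (e1 * G ^ t) ^ γ) atTop
      (𝓝 (rentAt c cy γ m (1 - s) (G * (e2 / e1 + s)))) := by
  have hs₀ : 0 ≤ s := ge_of_tendsto' hconv fun t =>
    (div_pos (hS t).1 (mul_pos he1 (pow_pos hG t))).le
  have hpair : Tendsto (fun t => (1 - S t / (e1 * G ^ t),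
      G * (e2 / e1 + S (t + 1) / (e1 * G ^ (t + 1))))) atTop (𝓝 (1 - s, G * (e2 / e1 + s))) :=
    (tendsto_const_nhds.sub hconv).prodMk_nhds
      ((tendsto_const_nhds.add (hconv.comp (tendsto_add_atTop_nat 1))).const_mul G)
  have hcont := hC.continuousAt_rentAt γ m (sub_pos.2 hs)
    (mul_pos hG (add_pos_of_pos_of_nonneg (div_pos he2 he1) hs₀))
  refine (hcont.tendsto.comp hpair).congr fun t => ?_
  rw [hS.rent_eq hC he1 he2 hG t, mul_div_cancel_left₀ _
    (rpow_pos_of_pos (mul_pos he1 (pow_pos hG t)) γ).ne']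
  rfl

end Equilibrium

theorem stmt_14_general (c cy cz cyy cyz czz : ℝ → ℝ → ℝ)
    (hC : AssumptionC c cy cz cyy cyz czz) (e1 e2 G γ m wb s ys zs : ℝ)
    (he1 : 0 < e1) (he2 : 0 < e2) (hG : 1 < G) (hγ1 : γ < 1) (hm : 0 < m)
    (hw : e2 / e1 < wb)
    (hs : s = (wb - e2 / e1) / (wb + 1)) (hys : ys = 1 - s) (hzs : zs = G * (e2 / e1 + s))
    (S : ℕ → ℝ) (hS : IsEquilibrium c cy cz e1 e2 G γ m S)
    (hconv : Tendsto (fun t : ℕ => S t / (e1 * G ^ t)) atTop (𝓝 s)) :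
    s ∈ Ioo (0:ℝ) 1 ∧
    Tendsto (fun t : ℕ => rent c cy e1 e2 G γ m S t / (e1 ^ γ * G ^ (γ * (t : ℝ))))
      atTop (𝓝 (m * c ys zs ^ γ / cy ys zs)) ∧
    Tendsto (fun t : ℕ => price c cy e1 e2 G γ m S t / (e1 * G ^ t)) atTop (𝓝 s) ∧
    Tendsto (fun t : ℕ => irate c cy e1 e2 G γ m S t) atTop (𝓝 G) ∧
    Tendsto (fun t : ℕ => price c cy e1 e2 G γ m S t / rent c cy e1 e2 G γ m S t)
      atTop atTop ∧
    Summable (fun t : ℕ =>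
      rent c cy e1 e2 G γ m S (t + 1) / price c cy e1 e2 G γ m S (t + 1)) := by
  have hw₀ : 0 < e2 / e1 := div_pos he2 he1
  have hs₀ : 0 < s := by rw [hs]; exact div_pos (by linarith) (by linarith)
  have hs₁ : s < 1 := by rw [hs, div_lt_one (by linarith)]; linarith
  have hG₀ : 0 < G := one_pos.trans hG
  have hN := tendsto_mul_pow_atTop he1 hG
  have hrent : Tendsto (fun t => rent c cy e1 e2 G γ m S t / (e1 * G ^ t) ^ γ) atTop
      (𝓝 (rentAt c cy γ m ys zs)) := by
    subst hys hzs; exact hS.tendsto_rent_div_rpow hC he1 he2 hG₀ hs₁ hconv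
  have hprice : Tendsto (fun t => price c cy e1 e2 G γ m S t / (e1 * G ^ t)) atTop (𝓝 s) := by
    simpa only [price, sub_div, sub_zero] using
      hconv.sub (tendsto_div_nhds_zero_of_tendsto_div_rpow hγ1 hN hrent)
  have hL : 0 < rentAt c cy γ m ys zs :=
    hC.rentAt_pos hm (by rw [hys]; linarith) (by rw [hzs]; positivity)
  have hscale (t : ℕ) : (e1 * G ^ t) ^ γ = e1 ^ γ * G ^ (γ * (t : ℝ)) := by
    rw [mul_rpow he1.le (pow_nonneg hG₀.le t), mul_comm γ, rpow_natCast_mul hG₀.le]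
  refine ⟨⟨hs₀, hs₁⟩, by simpa only [hscale, rentAt] using hrent, hprice,
    tendsto_succ_div_of_tendsto_div hN (fun t => by ring) hconv hprice hs₀.ne',
    tendsto_div_atTop_of_tendsto_div_rpow hγ1 hN hprice hs₀ hrent hL,
    (summable_nat_add_iff 1).mpr (summable_div_of_tendsto_div_rpow hN hprice hs₀.ne' hrent
      (summable_mul_pow_rpow he1 hG (by linarith)))⟩

/-- Asymptotics of the bubbly long run equilibrium: if `0 < γ < 1`, `w = e2/e1 < w_b^*`,
`s* = (w_b^* − w)/(w_b^* + 1)` and `(S_t)` is an equilibrium with `S_t/(e1·G^t) → s*`,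
then `s* ∈ (0,1)`, `r_t/(e1^γ·G^{γt}) → m·c(y*,z*)^γ/c_y(y*,z*)`, `P_t/(e1·G^t) → s*`,
`R_t → G`, the price-rent ratio diverges, and `∑ r_t/P_t < ∞` (a bubble). -/
theorem stmt_14 (c cy cz cyy cyz czz : ℝ → ℝ → ℝ)
    (hC : AssumptionC c cy cz cyy cyz czz) (e1 e2 G γ m wb s ys zs : ℝ)
    (he1 : 0 < e1) (he2 : 0 < e2) (hG : 1 < G) (hγ0 : 0 < γ) (hγ1 : γ < 1) (hm : 0 < m)
    (hwb0 : 0 < wb) (hwb : cy 1 (G * wb) / cz 1 (G * wb) = G)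
    (hw : e2 / e1 < wb)
    (hs : s = (wb - e2 / e1) / (wb + 1)) (hys : ys = 1 - s) (hzs : zs = G * (e2 / e1 + s))
    (S : ℕ → ℝ) (hS : IsEquilibrium c cy cz e1 e2 G γ m S)
    (hconv : Tendsto (fun t : ℕ => S t / (e1 * G ^ t)) atTop (𝓝 s)) :
    s ∈ Ioo (0:ℝ) 1 ∧
    Tendsto (fun t : ℕ => rent c cy e1 e2 G γ m S t / (e1 ^ γ * G ^ (γ * (t : ℝ))))
      atTop (𝓝 (m * c ys zs ^ γ / cy ys zs)) ∧
    Tendsto (fun t : ℕ => price c cy e1 e2 G γ m S t / (e1 * G ^ t)) atTop (𝓝 s) ∧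
    Tendsto (fun t : ℕ => irate c cy e1 e2 G γ m S t) atTop (𝓝 G) ∧
    Tendsto (fun t : ℕ => price c cy e1 e2 G γ m S t / rent c cy e1 e2 G γ m S t)
      atTop atTop ∧
    Summable (fun t : ℕ =>
      rent c cy e1 e2 G γ m S (t + 1) / price c cy e1 e2 G γ m S (t + 1)) :=
  stmt_14_general c cy cz cyy cyz czz hC e1 e2 G γ m wb s ys zs he1 he2 hG hγ1 hm hw hs hys hzs S hS
    hconv
end
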